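/- Let G be a connected graph of order n ≥ 3 and let W be a twin set of k ≥ 2 leaves (vertices of degree 1, all adjacent to a common vertex). Then η_p(G) ≥ k + 1. -/

import Mathlib

open SimpleGraph Set

/-- Distance from a vertex to a set of vertices. -/
noncomputable def pDist {V : Type*} (G : SimpleGraph V) (v : V) (S : Set V) : ℕ :=
  sInf (G.dist v '' S)

/-- A family of sets of vertices is resolving if every pair of distinct vertices
is distinguished by its distance to some part. -/
def IsResolvingFam {V : Type*} (G : SimpleGraph V) (P : Set (Set V)) : Prop :=
  ∀ u v : V, u ≠ v → ∃ S ∈ P, pDist G u S ≠ pDist G v S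

/-- A family of sets is dominating if every vertex is at distance exactly 1 from some part. -/
def IsDominatingFam {V : Type*} (G : SimpleGraph V) (P : Set (Set V)) : Prop :=
  ∀ v : V, ∃ S ∈ P, pDist G v S = 1

/-- The partition domination number: minimum cardinality of a dominating partition. -/
noncomputable def gammaP {V : Type*} (G : SimpleGraph V) : ℕ :=
  sInf {k | ∃ P : Set (Set V), Setoid.IsPartition P ∧ IsDominatingFam G P ∧ P.ncard = k}

/-- The partition dimension: minimum cardinality of a resolving partition. -/
noncomputable def betaP {V : Type*} (G : SimpleGraph V) : ℕ :=
  sInf {k | ∃ P : Set (Set V), Setoid.IsPartition P ∧ IsResolvingFam G P ∧ P.ncard = k}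

/-- The dominating partition dimension: minimum cardinality of a resolving dominating partition. -/
noncomputable def etaP {V : Type*} (G : SimpleGraph V) : ℕ :=
  sInf {k | ∃ P : Set (Set V), Setoid.IsPartition P ∧ IsResolvingFam G P ∧
    IsDominatingFam G P ∧ P.ncard = k}

/-- A resolving set of vertices. -/
def IsResolvingSet {V : Type*} (G : SimpleGraph V) (S : Set V) : Prop :=
  ∀ u v : V, u ≠ v → ∃ x ∈ S, G.dist u x ≠ G.dist v x

/-- A dominating set of vertices. -/
def IsDominatingSet {V : Type*} (G : SimpleGraph V) (S : Set V) : Prop :=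
  ∀ v : V, v ∉ S → ∃ u ∈ S, G.Adj u v

/-- The resolving domination number η(G). -/
noncomputable def etaNum {V : Type*} (G : SimpleGraph V) : ℕ :=
  sInf {k | ∃ S : Set V, IsResolvingSet G S ∧ IsDominatingSet G S ∧ S.ncard = k}

/-- A twin set: pairwise twin vertices. -/
def IsTwinSet {V : Type*} (G : SimpleGraph V) (W : Set V) : Prop :=
  ∀ u ∈ W, ∀ v ∈ W, ∀ w : V, w ≠ u → w ≠ v → G.dist u w = G.dist v w

/-- The join of two graphs. -/
def gJoin {α β : Type*} (G : SimpleGraph α) (H : SimpleGraph β) : SimpleGraph (α ⊕ β) :=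
  SimpleGraph.fromRel (fun x y =>
    (∃ a b, x = Sum.inl a ∧ y = Sum.inl b ∧ G.Adj a b) ∨
    (∃ a b, x = Sum.inr a ∧ y = Sum.inr b ∧ H.Adj a b) ∨
    (∃ a b, x = Sum.inl a ∧ y = Sum.inr b))

/-- The disjoint union of two graphs. -/
def gUnion {α β : Type*} (G : SimpleGraph α) (H : SimpleGraph β) : SimpleGraph (α ⊕ β) :=
  SimpleGraph.fromRel (fun x y =>
    (∃ a b, x = Sum.inl a ∧ y = Sum.inl b ∧ G.Adj a b) ∨
    (∃ a b, x = Sum.inr a ∧ y = Sum.inr b ∧ H.Adj a b))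

lemma leaf_dist {V : Type*} {G : SimpleGraph V} (hG : G.Connected) {v c : V}
    (hv : G.neighborSet v = {c}) {w : V} (hw : w ≠ v) :
    G.dist v w = G.dist c w + 1 := by
  have hadj : G.Adj v c := by
    have : c ∈ G.neighborSet v := by rw [hv]; rfl
    exact this
  have hle : G.dist v w ≤ G.dist c w + 1 := by
    calc G.dist v w ≤ G.dist v c + G.dist c w := hG.dist_triangle
    _ = G.dist c w + 1 := by
        rw [SimpleGraph.dist_eq_one_iff_adj.mpr hadj]; omega
  have hge : G.dist c w + 1 ≤ G.dist v w := by
    obtain ⟨p, hp⟩ := hG.exists_walk_length_eq_dist v w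
    cases p with
    | nil => exact absurd rfl hw
    | cons h q =>
      rename_i y
      have hy : y ∈ G.neighborSet v := h
      rw [hv] at hy
      subst hy
      have := SimpleGraph.dist_le q
      simp [SimpleGraph.Walk.length_cons] at hp
      omega
  omega

lemma twin_dist {V : Type*} {G : SimpleGraph V} (hG : G.Connected) {u v c : V}
    (hu : G.neighborSet u = {c}) (hv : G.neighborSet v = {c}) {w : V}
    (hwu : w ≠ u) (hwv : w ≠ v) : G.dist u w = G.dist v w := by
  rw [leaf_dist hG hu hwu, leaf_dist hG hv hwv]

lemma pDist_eq_zero_of_mem {V : Type*} (G : SimpleGraph V) {v : V} {S : Set V}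
    (h : v ∈ S) : pDist G v S = 0 := by
  have : G.dist v v ∈ G.dist v '' S := ⟨v, h, rfl⟩
  rw [SimpleGraph.dist_self] at this
  exact Nat.le_zero.mp (Nat.sInf_le this)

lemma pDist_singleton {V : Type*} (G : SimpleGraph V) (v x : V) :
    pDist G v {x} = G.dist v x := by
  simp [pDist]

theorem stmt_7 {V : Type*} [Fintype V] (G : SimpleGraph V) (hG : G.Connected)
    (hn : 3 ≤ Fintype.card V) (W : Set V) (c : V)
    (hLeaves : ∀ w ∈ W, G.neighborSet w = {c})
    (k : ℕ) (hk : 2 ≤ k) (hcard : W.ncard = k) :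
    k + 1 ≤ etaP G := by
  classical
  have hne : ∀ v : V, ∃ u : V, G.Adj v u := by
    intro v
    have : 1 < Fintype.card V := by omega
    obtain ⟨u, hu⟩ := Fintype.exists_ne_of_one_lt_card this v
    have hd : G.dist v u ≠ 0 := by
      simpa using (hG.pos_dist_of_ne (Ne.symm hu)).ne'
    obtain ⟨p, hp⟩ := hG.exists_walk_length_eq_dist v u
    cases p with
    | nil => simp at hd
    | cons h q => exact ⟨_, h⟩
  apply le_csInf
  · -- witness: singleton partition
    refine ⟨(Set.range fun v => ({v} : Set V)).ncard,
      Set.range fun v => ({v} : Set V), ⟨?_, ?_⟩, ?_, ?_, rfl⟩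
    · rintro ⟨x, hx⟩
      simp only [] at hx; exact (Set.singleton_nonempty x).ne_empty hx
    · intro a
      refine ⟨{a}, ⟨⟨a, rfl⟩, rfl⟩, ?_⟩
      rintro b ⟨⟨x, rfl⟩, hab⟩
      simp_all
    · intro u v huv
      refine ⟨{u}, ⟨u, rfl⟩, ?_⟩
      rw [pDist_singleton, pDist_singleton, SimpleGraph.dist_self]
      exact (hG.pos_dist_of_ne (Ne.symm huv)).ne
    · intro v
      obtain ⟨u, hu⟩ := hne v
      exact ⟨{u}, ⟨u, rfl⟩, by
        rw [pDist_singleton]; exact SimpleGraph.dist_eq_one_iff_adj.mpr hu⟩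
  · rintro n ⟨P, hPart, hRes, hDom, rfl⟩
    -- the part containing each vertex
    have hpart : ∀ v : V, ∃ S, (S ∈ P ∧ v ∈ S) ∧ ∀ T, T ∈ P ∧ v ∈ T → T = S := by
      intro v
      obtain ⟨S, hS, hU⟩ := hPart.2 v
      exact ⟨S, hS, hU⟩
    choose part hpartmem hpartuniq using hpart
    -- twins lie in distinct parts
    have hinj : ∀ u ∈ W, ∀ v ∈ W, u ≠ v → part u ≠ part v := by
      intro u hu v hv huv heq
      obtain ⟨T, hT, hTne⟩ := hRes u v huv
      apply hTne
      by_cases huT : u ∈ T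
      · have : T = part u := hpartuniq u T ⟨hT, huT⟩
        have hvT : v ∈ T := by rw [this, heq]; exact (hpartmem v).2
        rw [pDist_eq_zero_of_mem G huT, pDist_eq_zero_of_mem G hvT]
      · by_cases hvT : v ∈ T
        · have : T = part v := hpartuniq v T ⟨hT, hvT⟩
          have : u ∈ T := by rw [this, ← heq]; exact (hpartmem u).2
          exact absurd this huT
        · unfold pDist
          congr 1
          apply Set.image_congr
          intro x hx
          exact twin_dist hG (hLeaves u hu) (hLeaves v hv)
            (fun h => huT (h ▸ hx)) (fun h => hvT (h ▸ hx))
    -- each leaf's part differs from c's part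
    have hleafc : ∀ w ∈ W, part w ≠ part c := by
      intro w hw heq
      obtain ⟨T, hT, hT1⟩ := hDom w
      have hTne : T.Nonempty := by
        rcases Set.eq_empty_or_nonempty T with h | h
        · exact absurd (h ▸ hT) hPart.1
        · exact h
      have h1 : (1 : ℕ) ∈ G.dist w '' T := by
        rw [← hT1]
        exact Nat.sInf_mem (hTne.image _)
      obtain ⟨x, hxT, hx1⟩ := h1
      have hadj : G.Adj w x := SimpleGraph.dist_eq_one_iff_adj.mp hx1
      have hxc : x = c := by
        have : x ∈ G.neighborSet w := hadj
        rwa [hLeaves w hw] at this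
      rw [hxc] at hxT
      have hTc : T = part c := hpartuniq c T ⟨hT, hxT⟩
      have hwT : w ∉ T := by
        intro hwT
        rw [pDist_eq_zero_of_mem G hwT] at hT1
        exact one_ne_zero hT1.symm
      exact hwT (hTc ▸ heq ▸ (hpartmem w).2)
    -- counting
    have hWfin : W.Finite := Set.toFinite W
    have hPfin : P.Finite := Set.toFinite P
    have hsub : part '' W ⊆ P \ {part c} := by
      rintro _ ⟨w, hw, rfl⟩
      exact ⟨(hpartmem w).1, hleafc w hw⟩
    have hinjOn : Set.InjOn part W := by
      intro u hu v hv h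
      by_contra hne'
      exact hinj u hu v hv hne' h
    have h1 : W.ncard = (part '' W).ncard := (Set.ncard_image_of_injOn hinjOn).symm
    have h2 : (part '' W).ncard ≤ (P \ {part c}).ncard :=
      Set.ncard_le_ncard hsub hPfin.diff
    have h3 : (P \ {part c}).ncard + 1 = P.ncard :=
      Set.ncard_diff_singleton_add_one (hpartmem c).1 hPfin
    omega
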